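/- In the restricted system ECC⁻, types are unique up to conversion: if Γ ⊢ M : A and Γ ⊢ M : A' are both derivable in ECC⁻, then A ≃ A'. -/

import Mathlib

namespace ECC

/-- Terms of Luo's Extended Calculus of Constructions, in de Bruijn representation. -/
inductive Term : Type
  | var   : ℕ → Term
  | prop  : Term
  | type  : ℕ → Term
  | pi    : Term → Term → Term
  | sigma : Term → Term → Term
  | lam   : Term → Term → Term
  | app   : Term → Term → Term
  | pair  : Term → Term → Term → Term   -- ⟨M, N⟩_B with type annotation B
  | proj1 : Term → Term
  | proj2 : Term → Term
deriving DecidableEq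

/-- Lift (shift by `d`) all de Bruijn indices ≥ `k`. -/
def lift (d : ℕ) : ℕ → Term → Term
  | k, .var n       => if n < k then .var n else .var (n + d)
  | _, .prop        => .prop
  | _, .type j      => .type j
  | k, .pi A B      => .pi (lift d k A) (lift d (k+1) B)
  | k, .sigma A B   => .sigma (lift d k A) (lift d (k+1) B)
  | k, .lam A M     => .lam (lift d k A) (lift d (k+1) M)
  | k, .app M N     => .app (lift d k M) (lift d k N)
  | k, .pair M N B  => .pair (lift d k M) (lift d k N) (lift d k B)
  | k, .proj1 M     => .proj1 (lift d k M)
  | k, .proj2 M     => .proj2 (lift d k M)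

/-- Capture-avoiding substitution `[N/x]A` of the term `N` for the variable `x` in `A`. -/
def subst (N : Term) : ℕ → Term → Term
  | k, .var n       => if n < k then .var n else if n = k then lift k 0 N else .var (n - 1)
  | _, .prop        => .prop
  | _, .type j      => .type j
  | k, .pi A B      => .pi (subst N k A) (subst N (k+1) B)
  | k, .sigma A B   => .sigma (subst N k A) (subst N (k+1) B)
  | k, .lam A M     => .lam (subst N k A) (subst N (k+1) M)
  | k, .app M M'    => .app (subst N k M) (subst N k M')
  | k, .pair M M' B => .pair (subst N k M) (subst N k M') (subst N k B)
  | k, .proj1 M     => .proj1 (subst N k M)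
  | k, .proj2 M     => .proj2 (subst N k M)

/-- `[N/x₀]B` : substitution for the outermost bound variable. -/
def subst0 (B N : Term) : Term := subst N 0 B

/-- One-step reduction (β together with the projection reductions, closed under all
term-formation congruences). -/
inductive Red : Term → Term → Prop
  | beta    : Red (.app (.lam A M) N) (subst0 M N)
  | pr1     : Red (.proj1 (.pair M N B)) M
  | pr2     : Red (.proj2 (.pair M N B)) N
  | piL     : Red A A' → Red (.pi A B) (.pi A' B)
  | piR     : Red B B' → Red (.pi A B) (.pi A B')
  | sigmaL  : Red A A' → Red (.sigma A B) (.sigma A' B)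
  | sigmaR  : Red B B' → Red (.sigma A B) (.sigma A B')
  | lamL    : Red A A' → Red (.lam A M) (.lam A' M)
  | lamR    : Red M M' → Red (.lam A M) (.lam A M')
  | appL    : Red M M' → Red (.app M N) (.app M' N)
  | appR    : Red N N' → Red (.app M N) (.app M N')
  | pairL   : Red M M' → Red (.pair M N B) (.pair M' N B)
  | pairR   : Red N N' → Red (.pair M N B) (.pair M N' B)
  | pairB   : Red B B' → Red (.pair M N B) (.pair M N B')
  | proj1C  : Red M M' → Red (.proj1 M) (.proj1 M')
  | proj2C  : Red M M' → Red (.proj2 M) (.proj2 M')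

/-- Conversion `≃` : the equivalence relation generated by reduction. -/
def Conv : Term → Term → Prop := Relation.EqvGen Red

/-- `A` has a normal form. -/
def HasNF (A : Term) : Prop :=
  ∃ B, Relation.ReflTransGen Red A B ∧ ∀ C, ¬ Red B C

/-- `𝒯` : the set of normalisable terms. -/
def Tset : Set Term := {A | HasNF A}

/-- Universes are `Prop` and the `Type_j`. -/
def IsUniv (T : Term) : Prop := T = .prop ∨ ∃ j, T = .type j

/-- The cumulativity relation `⪯` : the smallest preorder containing conversion,
the universe order, congruence for Π in the codomain, and congruence for Σ in both
components. -/
inductive Cum : Term → Term → Prop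
  | conv     : Conv A B → Cum A B
  | propType : Cum .prop (.type 0)
  | typeType : j ≤ k → Cum (.type j) (.type k)
  | pi       : Conv A A' → Cum B B' → Cum (.pi A B) (.pi A' B')
  | sigma    : Cum A A' → Cum B B' → Cum (.sigma A B) (.sigma A' B')
  | trans    : Cum A B → Cum B C → Cum A C

/-- The strict cumulativity relation `≺` : `A ⪯ B` and `A ≄ B`. -/
def SCum (A B : Term) : Prop := Cum A B ∧ ¬ Conv A B

/-- The stratified cumulativity relations `⪯ᵢ`. -/
inductive CumL : ℕ → Term → Term → Prop
  | conv     : Conv A B → CumL i A B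
  | propType : CumL i .prop (.type j)
  | typeType : j < k → CumL i (.type j) (.type k)
  | succ     : CumL i A B → CumL (i+1) A B
  | pi       : Conv M (.pi A B) → Conv N (.pi A' B') → Conv A A' → CumL i B B' →
               CumL (i+1) M N
  | sigma    : Conv M (.sigma A B) → Conv N (.sigma A' B') → CumL i A A' → CumL i B B' →
               CumL (i+1) M N

/-- Strict stratified cumulativity `≺ᵢ`. -/
def SCumL (i : ℕ) (A B : Term) : Prop := CumL i A B ∧ ¬ Conv A B

/-- Is the outermost symbol of a term Π or Σ? -/
def BinderHeaded : Term → Prop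
  | .pi _ _    => True
  | .sigma _ _ => True
  | _          => False

/-- The base stratum: normalisable terms not convertible to a binder-headed
normalisable term. -/
def Base : Set Term :=
  {T | HasNF T ∧ ¬ ∃ B, HasNF B ∧ BinderHeaded B ∧ Conv T B}

/-- The stratification `(Π_n, Σ_n)` of `𝒯`. -/
def Strata : ℕ → Set Term × Set Term
  | 0 => (Base, Base)
  | n+1 =>
    ({T | ∃ k l, ∃ _ : k + l = n, ∃ A B, HasNF (Term.pi A B) ∧ Conv T (Term.pi A B) ∧
        A ∈ (Strata k).1 ∪ (Strata k).2 ∧ B ∈ (Strata l).1 ∪ (Strata l).2},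
     {T | ∃ k l, ∃ _ : k + l = n, ∃ A B, HasNF (Term.sigma A B) ∧ Conv T (Term.sigma A B) ∧
        A ∈ (Strata k).1 ∪ (Strata k).2 ∧ B ∈ (Strata l).1 ∪ (Strata l).2})
termination_by n => n
decreasing_by all_goals omega

/-- The stratum `Π_n`. -/
def PiStr (n : ℕ) : Set Term := (Strata n).1

/-- The stratum `Σ_n`. -/
def SigStr (n : ℕ) : Set Term := (Strata n).2

/-- The specification of the rank function `φ : 𝒯 → ω`. -/
def PhiSpec (φ : Term → ℕ) : Prop :=
  (∀ M N, HasNF M → HasNF N → Conv M N → φ M = φ N) ∧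
  (∀ T, HasNF T → Conv T .prop → φ T = 2) ∧
  (∀ T j, HasNF T → Conv T (.type j) → φ T = 3 + j) ∧
  (∀ T, T ∈ PiStr 0 → ¬ Conv T .prop → (∀ j, ¬ Conv T (.type j)) → φ T = 1) ∧
  (∀ T A B, HasNF T → (Conv T (.pi A B) ∨ Conv T (.sigma A B)) → φ T = φ A * φ B) ∧
  (∀ T, HasNF T → 0 < φ T)

mutual
/-- Valid contexts of ECC (de Bruijn: the head of the list is the most recent entry). -/
inductive Valid : List Term → Prop
  | nil  : Valid []
  | cons : Typing Γ A (.type j) → Valid (A :: Γ)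

/-- The typing judgement `Γ ⊢ M : A` of ECC. -/
inductive Typing : List Term → Term → Term → Prop
  | prop  : Valid Γ → Typing Γ .prop (.type 0)
  | type  : Valid Γ → Typing Γ (.type j) (.type (j+1))
  | var   : Valid Γ → Γ[n]? = some A → Typing Γ (.var n) (lift (n+1) 0 A)
  | pi1   : Typing Γ A (.type j) → Typing (A :: Γ) B .prop →
            Typing Γ (.pi A B) .prop
  | pi2   : Typing Γ A (.type j) → Typing (A :: Γ) B (.type j) →
            Typing Γ (.pi A B) (.type j)
  | sig   : Typing Γ A (.type j) → Typing (A :: Γ) B (.type j) →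
            Typing Γ (.sigma A B) (.type j)
  | lam   : Typing (A :: Γ) M B → Typing Γ (.lam A M) (.pi A B)
  | app   : Typing Γ M (.pi A B) → Typing Γ N A → Typing Γ (.app M N) (subst0 B N)
  | pair  : Typing Γ M A → Typing Γ N (subst0 B M) → Typing (A :: Γ) B (.type j) →
            Typing Γ (.pair M N (.sigma A B)) (.sigma A B)
  | proj1 : Typing Γ M (.sigma A B) → Typing Γ (.proj1 M) A
  | proj2 : Typing Γ M (.sigma A B) → Typing Γ (.proj2 M) (subst0 B (.proj1 M))
  | cum   : Typing Γ M A → Typing Γ B (.type j) → Cum A B → Typing Γ M B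
end

/-- `Type_j` for `j ∈ ℤ`, with the convention `Type_{-1} = Prop`. -/
def TType (j : ℤ) : Term := if j < 0 then .prop else .type j.toNat

/-- The typing judgement of the restricted system `ECC⁻`: the rules
`(Π2)(Σ)(app)(pair)(⪯)` of ECC are replaced by `(Π2')(Σ')(app')(pair')` and `(≃)_ρ`. -/
inductive TypingM : List Term → Term → Term → Prop
  | prop  : Valid Γ → TypingM Γ .prop (.type 0)
  | type  : Valid Γ → TypingM Γ (.type j) (.type (j+1))
  | var   : Valid Γ → Γ[n]? = some A → TypingM Γ (.var n) (lift (n+1) 0 A)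
  | pi1   : TypingM Γ A (.type j) → TypingM (A :: Γ) B .prop →
            TypingM Γ (.pi A B) .prop
  | pi2'  : TypingM Γ A (TType j) → TypingM (A :: Γ) B (TType k) → 0 ≤ k →
            TypingM Γ (.pi A B) (TType (max (max j k) 0))
  | sig'  : TypingM Γ A (TType j) → TypingM (A :: Γ) B (TType k) →
            TypingM Γ (.sigma A B) (TType (max (max j k) 0))
  | lam   : TypingM (A :: Γ) M B → TypingM Γ (.lam A M) (.pi A B)
  | app'  : TypingM Γ M (.pi A B) → TypingM Γ N A' → Cum A' A →
            TypingM Γ (.app M N) (subst0 B N)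
  | pair' : TypingM Γ M A → TypingM Γ N C → TypingM (A' :: Γ) B' (.type j) →
            Cum A A' → Cum C (subst0 B' M) →
            TypingM Γ (.pair M N (.sigma A' B')) (.sigma A' B')
  | proj1 : TypingM Γ M (.sigma A B) → TypingM Γ (.proj1 M) A
  | proj2 : TypingM Γ M (.sigma A B) → TypingM Γ (.proj2 M) (subst0 B (.proj1 M))
  | conv  : TypingM Γ M A → Conv A A' → Typing Γ A' (.type j) → TypingM Γ M A'

/-!
Strip the trailing conversion steps from an ECC⁻ derivation of `Γ ⊢ M : A`: what remains ends in
a structural rule with conclusion `Γ ⊢ M : B`, `B ≃ A`. The structural rules are syntax-directed,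
so two such derivations for the same `M` end in the same rule, except for `(Π1)` against `(Π2')`,
which the side condition `k ≥ 0` rules out since `Prop ≄ Type_k`. By induction the premises have
convertible types, and the conclusions are then compared using Church–Rosser (universes are
convertible only if equal, `Π` and `Σ` are injective up to conversion) and the stability of
conversion under substitution. Church–Rosser is proved with parallel reduction and complete
developments.
-/

open Relation

theorem lift_lift_of_le (N : Term) {d m i₀ i : ℕ} (h₀ : i₀ ≤ i) (h₁ : i ≤ i₀ + m) :
    lift d i (lift m i₀ N) = lift (d + m) i₀ N := by
  induction N generalizing i₀ i <;> grind [lift]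

theorem lift_lift_comm (N : Term) {d m i₀ : ℕ} (i : ℕ) (h : i₀ ≤ i) :
    lift d (i + m) (lift m i₀ N) = lift m i₀ (lift d i N) := by
  induction N generalizing i₀ i <;> grind [lift]

theorem subst_lift_of_le (P N : Term) {d i j : ℕ} (h₀ : i ≤ j) (h₁ : j ≤ i + d) :
    subst P j (lift (d + 1) i N) = lift d i N := by
  induction N generalizing i j <;> grind [lift, subst]

theorem lift_subst (P M : Term) (d i j : ℕ) :
    lift d (i + j) (subst P j M) = subst (lift d i P) j (lift d (i + j + 1) M) := by
  induction M generalizing j <;> grind [lift, subst, lift_lift_comm P (m := j) i (Nat.zero_le i)]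

theorem subst_lift_comm (N P : Term) {d i m : ℕ} (h : i ≤ m) :
    subst N (d + m) (lift d i P) = lift d i (subst N m P) := by
  induction P generalizing i m <;> grind [lift, subst, lift_lift_of_le]

theorem subst_subst (N P M : Term) (k j : ℕ) :
    subst N (k + j) (subst P j M) = subst (subst N k P) j (subst N (k + j + 1) M) := by
  induction M generalizing j with
  | var n =>
    have hP : subst N (k + j) (lift j 0 P) = lift j 0 (subst N k P) := by
      rw [Nat.add_comm]; exact subst_lift_comm N P (Nat.zero_le k)
    have hN : subst (subst N k P) j (lift (k + j + 1) 0 N) = lift (k + j) 0 N :=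
      subst_lift_of_le _ N (Nat.zero_le j) (by omega)
    grind [lift, subst]
  | _ => grind [subst]

theorem subst_subst0 (N P M : Term) (k : ℕ) :
    subst N k (subst0 M P) = subst0 (subst N (k + 1) M) (subst N k P) :=
  subst_subst N P M k 0

theorem lift_subst0 (P M : Term) (d i : ℕ) :
    lift d i (subst0 M P) = subst0 (lift d (i + 1) M) (lift d i P) :=
  lift_subst P M d i 0

abbrev Reds : Term → Term → Prop := ReflTransGen Red

section Congruence

variable {M M' N N' B B' : Term}

theorem Reds.pi (hM : Reds M M') (hN : Reds N N') : Reds (.pi M N) (.pi M' N') :=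
  (hM.lift (Term.pi · N) fun _ _ => .piL).trans (hN.lift (Term.pi M' ·) fun _ _ => .piR)

theorem Reds.sigma (hM : Reds M M') (hN : Reds N N') : Reds (.sigma M N) (.sigma M' N') :=
  (hM.lift (Term.sigma · N) fun _ _ => .sigmaL).trans
    (hN.lift (Term.sigma M' ·) fun _ _ => .sigmaR)

theorem Reds.lam (hM : Reds M M') (hN : Reds N N') : Reds (.lam M N) (.lam M' N') :=
  (hM.lift (Term.lam · N) fun _ _ => .lamL).trans (hN.lift (Term.lam M' ·) fun _ _ => .lamR)

theorem Reds.app (hM : Reds M M') (hN : Reds N N') : Reds (.app M N) (.app M' N') :=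
  (hM.lift (Term.app · N) fun _ _ => .appL).trans (hN.lift (Term.app M' ·) fun _ _ => .appR)

theorem Reds.pair (hM : Reds M M') (hN : Reds N N') (hB : Reds B B') :
    Reds (.pair M N B) (.pair M' N' B') :=
  (hM.lift (Term.pair · N B) fun _ _ => .pairL).trans <|
    (hN.lift (Term.pair M' · B) fun _ _ => .pairR).trans
      (hB.lift (Term.pair M' N' ·) fun _ _ => .pairB)

theorem Reds.proj1 (hM : Reds M M') : Reds (.proj1 M) (.proj1 M') :=
  hM.lift _ fun _ _ => .proj1C

theorem Reds.proj2 (hM : Reds M M') : Reds (.proj2 M) (.proj2 M') :=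
  hM.lift _ fun _ _ => .proj2C

end Congruence

/-- Parallel reduction. -/
inductive Par : Term → Term → Prop
  | var   : Par (.var n) (.var n)
  | prop  : Par .prop .prop
  | type  : Par (.type j) (.type j)
  | beta  : Par M M' → Par N N' → Par (.app (.lam A M) N) (subst0 M' N')
  | pr1   : Par M M' → Par (.proj1 (.pair M N B)) M'
  | pr2   : Par N N' → Par (.proj2 (.pair M N B)) N'
  | pi    : Par A A' → Par B B' → Par (.pi A B) (.pi A' B')
  | sigma : Par A A' → Par B B' → Par (.sigma A B) (.sigma A' B')
  | lam   : Par A A' → Par M M' → Par (.lam A M) (.lam A' M')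
  | app   : Par M M' → Par N N' → Par (.app M N) (.app M' N')
  | pair  : Par M M' → Par N N' → Par B B' → Par (.pair M N B) (.pair M' N' B')
  | proj1 : Par M M' → Par (.proj1 M) (.proj1 M')
  | proj2 : Par M M' → Par (.proj2 M) (.proj2 M')

namespace Par

theorem refl (t : Term) : Par t t := by
  induction t <;> constructor <;> assumption

theorem of_red {M N : Term} (h : Red M N) : Par M N := by
  induction h <;> constructor <;> first | assumption | exact refl _

theorem reds {M N : Term} (h : Par M N) : Reds M N := by
  induction h with
  | var | prop | type => exact .refl
  | beta _ _ ihM ihN => exact ((Reds.lam .refl ihM).app ihN).tail .beta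
  | pr1 _ ih => exact (Reds.pair ih .refl .refl).proj1.tail .pr1
  | pr2 _ ih => exact (Reds.pair .refl ih .refl).proj2.tail .pr2
  | pi _ _ ih₁ ih₂ => exact ih₁.pi ih₂
  | sigma _ _ ih₁ ih₂ => exact ih₁.sigma ih₂
  | lam _ _ ih₁ ih₂ => exact ih₁.lam ih₂
  | app _ _ ih₁ ih₂ => exact ih₁.app ih₂
  | pair _ _ _ ih₁ ih₂ ih₃ => exact ih₁.pair ih₂ ih₃
  | proj1 _ ih => exact ih.proj1
  | proj2 _ ih => exact ih.proj2

theorem lift {M M' : Term} (h : Par M M') (d i : ℕ) : Par (lift d i M) (lift d i M') := by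
  induction h generalizing i with
  | var => simp only [ECC.lift]; split <;> exact var
  | beta _ _ ihM ihN =>
    rw [ECC.lift, lift_subst0]
    exact beta (ihM (i + 1)) (ihN i)
  | _ => constructor <;> apply_assumption

theorem subst {M M' N N' : Term} (h : Par M M') (hN : Par N N') (k : ℕ) :
    Par (subst N k M) (subst N' k M') := by
  induction h generalizing k with
  | var =>
    simp only [ECC.subst]
    split_ifs
    · exact var
    · exact hN.lift k 0
    · exact var
  | beta _ _ ihM ihN =>
    rw [ECC.subst, subst_subst0]
    exact beta (ihM (k + 1)) (ihN k)
  | _ => constructor <;> apply_assumption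

end Par

/-- Takahashi's complete development: contracts all redexes of the term simultaneously. -/
def cd : Term → Term
  | .var n => .var n
  | .prop => .prop
  | .type j => .type j
  | .pi A B => .pi (cd A) (cd B)
  | .sigma A B => .sigma (cd A) (cd B)
  | .lam A M => .lam (cd A) (cd M)
  | .app (.lam _ M) N => subst0 (cd M) (cd N)
  | .app M N => .app (cd M) (cd N)
  | .pair M N B => .pair (cd M) (cd N) (cd B)
  | .proj1 (.pair M _ _) => cd M
  | .proj1 M => .proj1 (cd M)
  | .proj2 (.pair _ N _) => cd N
  | .proj2 M => .proj2 (cd M)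

theorem Par.triangle {M N : Term} (h : Par M N) : Par N (cd M) := by
  induction h with
  | beta _ _ ihM ihN => exact ihM.subst ihN 0
  | pr1 _ ih | pr2 _ ih => exact ih
  | @app M₁ _ _ _ hM _ ih₁ ih₂ =>
    cases hM with
    | lam _ _ =>
      cases ih₁ with
      | lam _ ihM => exact beta ihM ih₂
    | _ => exact app ih₁ ih₂
  | @proj1 M₁ _ hM ih =>
    cases hM with
    | pair _ _ _ =>
      cases ih with
      | pair ihM _ _ => exact pr1 ihM
    | _ => exact proj1 ih
  | @proj2 M₁ _ hM ih =>
    cases hM with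
    | pair _ _ _ =>
      cases ih with
      | pair _ ihN _ => exact pr2 ihN
    | _ => exact proj2 ih
  | _ => constructor <;> assumption

theorem Conv.exists_reds {A B : Term} (h : Conv A B) : ∃ C, Reds A C ∧ Reds B C := by
  have hJoin : Equivalence (Join (ReflTransGen Par)) :=
    equivalence_join_reflTransGen fun _ _ _ hab hac =>
      ⟨_, .single hab.triangle, .single hac.triangle⟩
  obtain ⟨C, hAC, hBC⟩ :=
    hJoin.eqvGen_iff.mp (h.mono fun _ b hab => ⟨b, .single (Par.of_red hab), .refl⟩)
  exact ⟨C, reflTransGen_closed (fun _ _ => Par.reds) _ _ hAC,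
    reflTransGen_closed (fun _ _ => Par.reds) _ _ hBC⟩

theorem Conv.of_reds {A B : Term} (h : Reds A B) : Conv A B :=
  reflTransGen_le_of_equivalence_of_le (EqvGen.is_equivalence Red) (EqvGen.rel) _ _ h

theorem Conv.of_reds_of_reds {A B C : Term} (hA : Reds A C) (hB : Reds B C) : Conv A B :=
  (Conv.of_reds hA).trans _ _ _ (Conv.of_reds hB).symm

theorem Conv.map {f : Term → Term} (hf : ∀ a b, Red a b → Reds (f a) (f b)) {A B : Term}
    (h : Conv A B) : Conv (f A) (f B) := by
  induction h with
  | rel _ _ hab => exact .of_reds (hf _ _ hab)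
  | refl => exact .refl _
  | symm _ _ _ ih => exact ih.symm
  | trans _ _ _ _ _ ih₁ ih₂ => exact ih₁.trans _ _ _ ih₂

theorem Conv.pi_right (A : Term) {B B' : Term} (h : Conv B B') : Conv (.pi A B) (.pi A B') :=
  h.map fun _ _ hr => .single (.piR hr)

theorem Conv.subst0_congr {B B' : Term} (N : Term) (h : Conv B B') :
    Conv (subst0 B N) (subst0 B' N) :=
  h.map fun _ _ hr => ((Par.of_red hr).subst (.refl N) 0).reds

section HeadShapes

variable {A B X : Term}

theorem eq_prop_of_reds_prop (h : Reds .prop X) : X = .prop := by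
  induction h with
  | refl => rfl
  | tail _ hr ih => subst ih; cases hr

theorem eq_type_of_reds_type {j : ℕ} (h : Reds (.type j) X) : X = .type j := by
  induction h with
  | refl => rfl
  | tail _ hr ih => subst ih; cases hr

theorem exists_eq_pi_of_reds_pi (h : Reds (.pi A B) X) :
    ∃ A' B', X = .pi A' B' ∧ Reds A A' ∧ Reds B B' := by
  induction h with
  | refl => exact ⟨A, B, rfl, .refl, .refl⟩
  | tail _ hr ih =>
    obtain ⟨A', B', rfl, hA, hB⟩ := ih
    cases hr with
    | piL hr => exact ⟨_, _, rfl, hA.tail hr, hB⟩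
    | piR hr => exact ⟨_, _, rfl, hA, hB.tail hr⟩

theorem exists_eq_sigma_of_reds_sigma (h : Reds (.sigma A B) X) :
    ∃ A' B', X = .sigma A' B' ∧ Reds A A' ∧ Reds B B' := by
  induction h with
  | refl => exact ⟨A, B, rfl, .refl, .refl⟩
  | tail _ hr ih =>
    obtain ⟨A', B', rfl, hA, hB⟩ := ih
    cases hr with
    | sigmaL hr => exact ⟨_, _, rfl, hA.tail hr, hB⟩
    | sigmaR hr => exact ⟨_, _, rfl, hA, hB.tail hr⟩

end HeadShapes

section Injectivity

variable {A B A' B' : Term}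

theorem not_conv_prop_type (j : ℕ) : ¬ Conv .prop (.type j) := fun h => by
  obtain ⟨C, hprop, htype⟩ := h.exists_reds
  rw [eq_prop_of_reds_prop hprop] at htype
  cases eq_type_of_reds_type htype

theorem Conv.type_inj {j k : ℕ} (h : Conv (.type j) (.type k)) : j = k := by
  obtain ⟨C, hj, hk⟩ := h.exists_reds
  rw [eq_type_of_reds_type hj] at hk
  exact Term.type.inj (eq_type_of_reds_type hk)

theorem Conv.pi_inj (h : Conv (.pi A B) (.pi A' B')) : Conv A A' ∧ Conv B B' := by
  obtain ⟨C, h, h'⟩ := h.exists_reds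
  obtain ⟨A₁, B₁, rfl, hA, hB⟩ := exists_eq_pi_of_reds_pi h
  obtain ⟨A₂, B₂, he, hA', hB'⟩ := exists_eq_pi_of_reds_pi h'
  cases he
  exact ⟨.of_reds_of_reds hA hA', .of_reds_of_reds hB hB'⟩

theorem Conv.sigma_inj (h : Conv (.sigma A B) (.sigma A' B')) : Conv A A' ∧ Conv B B' := by
  obtain ⟨C, h, h'⟩ := h.exists_reds
  obtain ⟨A₁, B₁, rfl, hA, hB⟩ := exists_eq_sigma_of_reds_sigma h
  obtain ⟨A₂, B₂, he, hA', hB'⟩ := exists_eq_sigma_of_reds_sigma h'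
  cases he
  exact ⟨.of_reds_of_reds hA hA', .of_reds_of_reds hB hB'⟩

end Injectivity

theorem TType_of_nonneg {k : ℤ} (hk : 0 ≤ k) : TType k = .type k.toNat :=
  if_neg (by omega)

theorem max_zero_eq_of_conv_TType {j k : ℤ} (h : Conv (TType j) (TType k)) :
    max j 0 = max k 0 := by
  unfold TType at h
  split_ifs at h
  · omega
  · exact absurd h (not_conv_prop_type _)
  · exact absurd h.symm (not_conv_prop_type _)
  · have := h.type_inj
    omega

theorem TType_max_congr {j k j' k' : ℤ} (hj : Conv (TType j) (TType j'))
    (hk : Conv (TType k) (TType k')) : TType (max (max j k) 0) = TType (max (max j' k') 0) := by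
  have := max_zero_eq_of_conv_TType hj
  have := max_zero_eq_of_conv_TType hk
  congr 1
  omega

/-- `Γ ⊢ M : A` in ECC⁻ by a derivation whose last rule is not `(≃)_ρ`. -/
inductive HeadTypingM : List Term → Term → Term → Prop
  | prop  : Valid Γ → HeadTypingM Γ .prop (.type 0)
  | type  : Valid Γ → HeadTypingM Γ (.type j) (.type (j+1))
  | var   : Valid Γ → Γ[n]? = some A → HeadTypingM Γ (.var n) (lift (n+1) 0 A)
  | pi1   : TypingM Γ A (.type j) → TypingM (A :: Γ) B .prop →
            HeadTypingM Γ (.pi A B) .prop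
  | pi2'  : TypingM Γ A (TType j) → TypingM (A :: Γ) B (TType k) → 0 ≤ k →
            HeadTypingM Γ (.pi A B) (TType (max (max j k) 0))
  | sig'  : TypingM Γ A (TType j) → TypingM (A :: Γ) B (TType k) →
            HeadTypingM Γ (.sigma A B) (TType (max (max j k) 0))
  | lam   : TypingM (A :: Γ) M B → HeadTypingM Γ (.lam A M) (.pi A B)
  | app'  : TypingM Γ M (.pi A B) → TypingM Γ N A' → Cum A' A →
            HeadTypingM Γ (.app M N) (subst0 B N)
  | pair' : TypingM Γ M A → TypingM Γ N C → TypingM (A' :: Γ) B' (.type j) →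
            Cum A A' → Cum C (subst0 B' M) →
            HeadTypingM Γ (.pair M N (.sigma A' B')) (.sigma A' B')
  | proj1 : TypingM Γ M (.sigma A B) → HeadTypingM Γ (.proj1 M) A
  | proj2 : TypingM Γ M (.sigma A B) → HeadTypingM Γ (.proj2 M) (subst0 B (.proj1 M))

namespace TypingM

variable {Γ : List Term} {M A : Term}

theorem exists_headTypingM_conv (h : TypingM Γ M A) : ∃ B, HeadTypingM Γ M B ∧ Conv B A := by
  induction h with
  | conv _ hc _ ih =>
    obtain ⟨B, hB, hBA⟩ := ih
    exact ⟨B, hB, hBA.trans _ _ _ hc⟩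
  | _ => exact ⟨_, by constructor <;> assumption, .refl _⟩

theorem conv_of_forall_headTypingM {A' : Term} (h' : TypingM Γ M A')
    (hA : ∀ {B}, HeadTypingM Γ M B → Conv A B) : Conv A A' := by
  obtain ⟨B, hB, hBA'⟩ := h'.exists_headTypingM_conv
  exact (hA hB).trans _ _ _ hBA'

theorem conv_of_typingM (h : TypingM Γ M A) {A' : Term} (h' : TypingM Γ M A') : Conv A A' := by
  induction h generalizing A' with
  | conv _ hc _ ih => exact hc.symm.trans _ _ _ (ih h')
  | prop | type | pair' => exact conv_of_forall_headTypingM h' fun hB => by cases hB; exact .refl _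
  | var _ hA =>
    refine conv_of_forall_headTypingM h' fun | .var _ hA' => ?_
    cases hA.symm.trans hA'
    exact .refl _
  | pi1 _ _ _ ihB =>
    exact conv_of_forall_headTypingM h' fun
      | .pi1 .. => .refl _
      | .pi2' _ hB hk => absurd (TType_of_nonneg hk ▸ ihB hB) (not_conv_prop_type _)
  | pi2' _ _ hk ihA ihB =>
    exact conv_of_forall_headTypingM h' fun
      | .pi1 _ hB => absurd (TType_of_nonneg hk ▸ ihB hB).symm (not_conv_prop_type _)
      | .pi2' hA hB _ => TType_max_congr (ihA hA) (ihB hB) ▸ .refl _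
  | sig' _ _ ihA ihB =>
    exact conv_of_forall_headTypingM h' fun
      | .sig' hA hB => TType_max_congr (ihA hA) (ihB hB) ▸ .refl _
  | lam _ ihM => exact conv_of_forall_headTypingM h' fun | .lam hM => (ihM hM).pi_right _
  | app' _ _ _ ihM =>
    exact conv_of_forall_headTypingM h' fun | .app' hM .. => (ihM hM).pi_inj.2.subst0_congr _
  | proj1 _ ihM => exact conv_of_forall_headTypingM h' fun | .proj1 hM => (ihM hM).sigma_inj.1
  | proj2 _ ihM =>
    exact conv_of_forall_headTypingM h' fun | .proj2 hM => (ihM hM).sigma_inj.2.subst0_congr _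

end TypingM

end ECC

/-- in the restricted system `ECC⁻`, types are unique up to conversion:
if `Γ ⊢ M : A` and `Γ ⊢ M : A'` are both derivable in `ECC⁻`, then `A ≃ A'`. -/
theorem eccMinus_type_unique {Γ : List ECC.Term} {M A A' : ECC.Term}
    (h : ECC.TypingM Γ M A) (h' : ECC.TypingM Γ M A') : ECC.Conv A A' :=
  h.conv_of_typingM h'
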